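/- Let d ≥ 1, w > 0, let A ∈ ℝ^{d×d} be a symmetric matrix, and let ν ∈ ℝ^d be a unit vector. Then ∫_{ℝ^d} (Az)·∇G_w(z) · (ν·z)₊ dz = −(√w/√π)·(tr A + ν·Aν), where ∇G_w is the gradient of G_w and (·)₊ denotes the positive part. -/

import Mathlib

/-
Since `∇G_w(z) = -(2w)⁻¹ G_w(z) z`, the integral is `-(2w)⁻¹ ∫ ⟪Az, z⟫ (ν·z)₊ G_w(z) dz`.
Rotating by an orthonormal basis containing `ν` keeps `G_w`, which is a product of
one-dimensional Gaussians of variance `2w`, and turns `(ν·z)₊` into the positive part of one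
coordinate. By Fubini, only the diagonal entries of the matrix of `A` in that basis survive:
each contributes `E[t²] E[t₊] = 2w · √w/√π`, and the entry at `ν` contributes
`E[t² t₊] = 4w · √w/√π`, twice as much. The half-line Gaussian moments are Gamma values.
-/

open Real MeasureTheory
open scoped RealInnerProductSpace

/-- The `d`-dimensional heat kernel `G_t(z) = (4πt)^{-d/2} exp(-|z|²/(4t))`. -/
noncomputable def heatKE (d : ℕ) (t : ℝ) (z : EuclideanSpace ℝ (Fin d)) : ℝ :=
  (4 * Real.pi * t) ^ (-(d : ℝ) / 2) * Real.exp (-‖z‖ ^ 2 / (4 * t))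

open Set Matrix

lemma integral_Ioi_pow_mul_exp_neg_mul_sq {b : ℝ} (hb : 0 < b) (n : ℕ) :
    ∫ x in Ioi (0 : ℝ), x ^ n * exp (-b * x ^ 2) = Gamma ((n + 1) / 2) / (2 * √b ^ (n + 1)) := by
  have h := integral_rpow_mul_exp_neg_mul_rpow two_pos
    (by linarith [(n.cast_nonneg : (0 : ℝ) ≤ n)]) hb (q := n)
  simp only [rpow_natCast, rpow_two] at h
  rw [h, sqrt_eq_rpow, ← rpow_natCast, ← rpow_mul hb.le, neg_div, rpow_neg hb.le]
  push_cast
  field_simp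

noncomputable def heatKernel1D (w t : ℝ) : ℝ :=
  (√(4 * π * w))⁻¹ * exp (-t ^ 2 / (4 * w))

section

variable {w : ℝ}

lemma heatKernel1D_eq (w t : ℝ) :
    heatKernel1D w t = (√(4 * π * w))⁻¹ * exp (-(4 * w)⁻¹ * t ^ 2) := by
  rw [heatKernel1D, neg_div, div_eq_inv_mul, neg_mul]

lemma heatKernel1D_neg (w t : ℝ) : heatKernel1D w (-t) = heatKernel1D w t := by
  simp [heatKernel1D]

lemma integrable_pow_mul_heatKernel1D (hw : 0 < w) (n : ℕ) :
    Integrable (fun t => t ^ n * heatKernel1D w t) := by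
  have h := integrable_rpow_mul_exp_neg_mul_sq (inv_pos.2 (mul_pos four_pos hw))
    (by linarith [(n.cast_nonneg : (0 : ℝ) ≤ n)] : (-1 : ℝ) < n)
  simp only [rpow_natCast] at h
  simpa [heatKernel1D_eq, mul_left_comm] using h.const_mul (√(4 * π * w))⁻¹

lemma integrable_pow_mul_posPart_mul_heatKernel1D (hw : 0 < w) (n : ℕ) :
    Integrable (fun t => t ^ n * max t 0 * heatKernel1D w t) := by
  refine (integrable_pow_mul_heatKernel1D hw (n + 1)).norm.mono' (by unfold heatKernel1D; fun_prop)
    (ae_of_all _ fun t => ?_)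
  have hmax : |max t 0| ≤ |t| := by rcases le_total t 0 with h | h <;> simp [h, abs_nonneg]
  simp only [norm_mul, norm_pow, Real.norm_eq_abs, pow_succ]
  gcongr

lemma integral_Ioi_pow_mul_heatKernel1D (hw : 0 < w) (n : ℕ) :
    ∫ t in Ioi (0 : ℝ), t ^ n * heatKernel1D w t
      = (2 * √w) ^ n * Gamma ((n + 1) / 2) / (2 * √π) := by
  simp_rw [heatKernel1D_eq, mul_left_comm _ (√(4 * π * w))⁻¹]
  rw [integral_const_mul, integral_Ioi_pow_mul_exp_neg_mul_sq (by positivity)]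
  have h4πw : √(4 * π * w) = 2 * √π * √w := by
    rw [sqrt_mul (by positivity), sqrt_mul (by norm_num), show (4 : ℝ) = 2 ^ 2 by norm_num,
      sqrt_sq zero_le_two]
  have h4w : √(4 * w)⁻¹ = (2 * √w)⁻¹ := by
    rw [sqrt_inv, sqrt_mul zero_le_four, show (4 : ℝ) = 2 ^ 2 by norm_num, sqrt_sq zero_le_two]
  have : 0 < √w := sqrt_pos.2 hw
  rw [h4πw, h4w, inv_pow, pow_succ]
  field_simp

lemma integral_pow_mul_heatKernel1D_of_even {n : ℕ} (hn : Even n) :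
    ∫ t, t ^ n * heatKernel1D w t = 2 * ∫ t in Ioi (0 : ℝ), t ^ n * heatKernel1D w t := by
  rw [← integral_comp_abs]
  congr 1 with t
  simp only [heatKernel1D, hn.pow_abs, sq_abs]

lemma integral_pow_mul_heatKernel1D_of_odd {n : ℕ} (hn : Odd n) :
    ∫ t, t ^ n * heatKernel1D w t = 0 := by
  have h := integral_neg_eq_self (fun t => t ^ n * heatKernel1D w t) volume
  simp only [hn.neg_pow, heatKernel1D_neg, neg_mul, integral_neg] at h
  linarith

lemma integral_pow_mul_posPart_mul_heatKernel1D (n : ℕ) :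
    ∫ t, t ^ n * max t 0 * heatKernel1D w t
      = ∫ t in Ioi (0 : ℝ), t ^ (n + 1) * heatKernel1D w t := by
  rw [← integral_indicator measurableSet_Ioi]
  congr 1 with t
  rcases le_or_gt t 0 with h | h
  · simp [h, not_lt.2 h]
  · simp [h, h.le, pow_succ]

lemma integral_heatKernel1D (hw : 0 < w) : ∫ t, heatKernel1D w t = 1 := by
  have h := integral_pow_mul_heatKernel1D_of_even (w := w) (n := 0) ⟨0, rfl⟩
  rw [integral_Ioi_pow_mul_heatKernel1D hw] at h
  norm_num [Gamma_one_half_eq] at h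
  rw [h]
  field_simp

lemma integral_sq_mul_heatKernel1D (hw : 0 < w) : ∫ t, t ^ 2 * heatKernel1D w t = 2 * w := by
  have hΓ : Gamma (3 / 2) = √π / 2 := by
    rw [show (3 / 2 : ℝ) = 1 / 2 + 1 by norm_num, Gamma_add_one (by norm_num), Gamma_one_half_eq]
    ring
  rw [integral_pow_mul_heatKernel1D_of_even even_two, integral_Ioi_pow_mul_heatKernel1D hw]
  norm_num [hΓ]
  rw [mul_pow, sq_sqrt hw.le]
  field_simp

lemma integral_posPart_mul_heatKernel1D (hw : 0 < w) :
    ∫ t, max t 0 * heatKernel1D w t = √w / √π := by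
  have h := integral_pow_mul_posPart_mul_heatKernel1D (w := w) 0
  simp only [pow_zero, one_mul, zero_add] at h
  rw [h, integral_Ioi_pow_mul_heatKernel1D hw]
  norm_num
  field_simp

lemma integral_sq_mul_posPart_mul_heatKernel1D (hw : 0 < w) :
    ∫ t, t ^ 2 * max t 0 * heatKernel1D w t = 4 * w * (√w / √π) := by
  rw [integral_pow_mul_posPart_mul_heatKernel1D, integral_Ioi_pow_mul_heatKernel1D hw]
  norm_num [Gamma_two]
  rw [pow_succ, mul_pow, sq_sqrt hw.le]
  ring

section Coordinates

variable {ι : Type*} [DecidableEq ι]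

noncomputable def monomialFactor (i j i₀ k : ι) (t : ℝ) : ℝ :=
  t ^ ((if k = i then 1 else 0) + (if k = j then 1 else 0)) * (if k = i₀ then max t 0 else 1)

lemma mul_mul_posPart_mul_prod_heatKernel1D [Fintype ι] (i j i₀ : ι) (y : ι → ℝ) :
    y i * y j * max (y i₀) 0 * ∏ k, heatKernel1D w (y k)
      = ∏ k, monomialFactor i j i₀ k (y k) * heatKernel1D w (y k) := by
  simp only [monomialFactor, pow_add, pow_ite, pow_one, pow_zero, Finset.prod_mul_distrib,
    Finset.prod_ite_eq', Finset.mem_univ, if_true]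

lemma integrable_monomialFactor_mul_heatKernel1D (hw : 0 < w) (i j i₀ k : ι) :
    Integrable (fun t => monomialFactor i j i₀ k t * heatKernel1D w t) := by
  unfold monomialFactor
  generalize (if k = i then 1 else 0) + (if k = j then 1 else 0) = n
  split_ifs
  · exact integrable_pow_mul_posPart_mul_heatKernel1D hw n
  · simpa using integrable_pow_mul_heatKernel1D hw n

lemma integral_mul_mul_posPart_mul_prod_heatKernel1D [Fintype ι] (hw : 0 < w) (i j i₀ : ι) :
    ∫ y : ι → ℝ, y i * y j * max (y i₀) 0 * ∏ k, heatKernel1D w (y k)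
      = if i = j then 2 * w * (√w / √π) * (if i = i₀ then 2 else 1) else 0 := by
  simp_rw [mul_mul_posPart_mul_prod_heatKernel1D i j i₀]
  rw [integral_fintype_prod_volume_eq_prod
    (fun k t => monomialFactor i j i₀ k t * heatKernel1D w t)]
  have hodd : ∫ t, t * heatKernel1D w t = 0 := by
    simpa using integral_pow_mul_heatKernel1D_of_odd (w := w) odd_one
  rcases ne_or_eq i j with hij | rfl
  · rw [if_neg hij]
    obtain ⟨k, hk, hk₀⟩ :
        ∃ k, (if k = i then 1 else 0) + (if k = j then 1 else 0) = 1 ∧ k ≠ i₀ := by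
      rcases eq_or_ne i i₀ with rfl | hi₀
      · exact ⟨j, by simp [hij.symm], hij.symm⟩
      · exact ⟨i, by simp [hij], hi₀⟩
    refine Finset.prod_eq_zero (Finset.mem_univ k) ?_
    simpa only [monomialFactor, hk, if_neg hk₀, pow_one, mul_one] using hodd
  rcases eq_or_ne i i₀ with rfl | hi₀
  · rw [Fintype.prod_eq_single i fun k hk => by
      simp [monomialFactor, hk, integral_heatKernel1D hw]]
    simp [monomialFactor, integral_sq_mul_posPart_mul_heatKernel1D hw]
    ring
  · rw [Fintype.prod_eq_mul i i₀ hi₀ fun k hk => by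
      simp [monomialFactor, hk, integral_heatKernel1D hw]]
    simp [monomialFactor, hi₀, hi₀.symm, integral_sq_mul_heatKernel1D hw,
      integral_posPart_mul_heatKernel1D hw]

lemma integrable_mul_mul_posPart_mul_prod_heatKernel1D [Fintype ι] (hw : 0 < w) (i j i₀ : ι) :
    Integrable (fun y : ι → ℝ => y i * y j * max (y i₀) 0 * ∏ k, heatKernel1D w (y k)) := by
  simp_rw [mul_mul_posPart_mul_prod_heatKernel1D i j i₀]
  exact Integrable.fintype_prod (integrable_monomialFactor_mul_heatKernel1D hw i j i₀)

lemma integral_quadForm_mul_posPart_mul_prod_heatKernel1D [Fintype ι] (hw : 0 < w)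
    (M : Matrix ι ι ℝ) (i₀ : ι) :
    ∫ y : ι → ℝ, (M *ᵥ y ⬝ᵥ y) * max (y i₀) 0 * ∏ k, heatKernel1D w (y k)
      = 2 * w * (√w / √π) * (M.trace + M i₀ i₀) := by
  have hexpand : ∀ y : ι → ℝ, (M *ᵥ y ⬝ᵥ y) * max (y i₀) 0 * ∏ k, heatKernel1D w (y k)
      = ∑ i, ∑ j, M i j * (y i * y j * max (y i₀) 0 * ∏ k, heatKernel1D w (y k)) := by
    intro y
    simp only [dotProduct, Matrix.mulVec, Finset.sum_mul]
    refine Finset.sum_congr rfl fun i _ => Finset.sum_congr rfl fun j _ => ?_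
    ring
  have hint := integrable_mul_mul_posPart_mul_prod_heatKernel1D (ι := ι) (w := w) hw
  simp_rw [hexpand]
  rw [integral_finsetSum _ fun i _ =>
    integrable_finsetSum _ fun j _ => (hint i j i₀).const_mul (M i j)]
  simp_rw [integral_finsetSum _ fun j _ => (hint _ j i₀).const_mul (M _ j), integral_const_mul,
    integral_mul_mul_posPart_mul_prod_heatKernel1D hw]
  have hsplit : ∀ i, (∑ j, M i j * if i = j then 2 * w * (√w / √π) * (if i = i₀ then 2 else 1)
      else 0) = 2 * w * (√w / √π) * (M i i + if i = i₀ then M i i else 0) := by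
    intro i
    rw [Fintype.sum_eq_single i fun j hj => by simp [Ne.symm hj], if_pos rfl]
    split_ifs <;> ring
  simp_rw [hsplit, ← Finset.mul_sum, Finset.sum_add_distrib, Finset.sum_ite_eq', Finset.mem_univ,
    if_true, Matrix.trace, Matrix.diag]

end Coordinates

lemma heatKE_eq_prod {d : ℕ} (hw : 0 ≤ w) (y : EuclideanSpace ℝ (Fin d)) :
    heatKE d w y = ∏ k, heatKernel1D w (y k) := by
  simp only [heatKE, heatKernel1D, Finset.prod_mul_distrib, Finset.prod_const, Finset.card_univ,
    Fintype.card_fin, ← exp_sum, ← Finset.sum_div, Finset.sum_neg_distrib,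
    EuclideanSpace.norm_sq_eq, Real.norm_eq_abs, sq_abs]
  rw [sqrt_eq_rpow, ← rpow_neg (by positivity), ← rpow_natCast, ← rpow_mul (by positivity)]
  ring_nf

lemma gradient_heatKE (d : ℕ) (w : ℝ) (z : EuclideanSpace ℝ (Fin d)) :
    gradient (heatKE d w) z = (-(2 * w)⁻¹ * heatKE d w z) • z := by
  have hG : heatKE d w = fun y => (4 * π * w) ^ (-(d : ℝ) / 2) * exp (-(4 * w)⁻¹ * ‖y‖ ^ 2) := by
    ext y
    rw [heatKE, div_eq_inv_mul (-‖y‖ ^ 2), mul_neg, neg_mul]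
  refine HasGradientAt.gradient ?_
  rw [hasGradientAt_iff_hasFDerivAt, hG]
  refine ((((hasStrictFDerivAt_norm_sq z).hasFDerivAt.const_mul _).exp).const_mul _).congr_fderiv ?_
  ext x
  simp
  ring

lemma inner_map_repr_symm_toLp {ι E : Type*} [Fintype ι] [DecidableEq ι] [NormedAddCommGroup E]
    [InnerProductSpace ℝ E] (b : OrthonormalBasis ι ℝ E) (f : E →ₗ[ℝ] E) (x : ι → ℝ) :
    ⟪f (b.repr.symm (WithLp.toLp 2 x)), b.repr.symm (WithLp.toLp 2 x)⟫
      = LinearMap.toMatrix b.toBasis b.toBasis f *ᵥ x ⬝ᵥ x := by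
  rw [← b.repr.inner_map_map, LinearIsometryEquiv.apply_symm_apply,
    EuclideanSpace.inner_eq_star_dotProduct]
  have hmul := LinearMap.toMatrix_mulVec_repr b.toBasis b.toBasis f (b.repr.symm (WithLp.toLp 2 x))
  have hrepr : ∀ v, ⇑(b.toBasis.repr v) = (b.repr v).ofLp :=
    fun v => funext (b.coe_toBasis_repr_apply v)
  rw [hrepr, hrepr, LinearIsometryEquiv.apply_symm_apply] at hmul
  rw [← hmul, star_trivial, dotProduct_comm]

lemma exists_orthonormalBasis_apply_eq {ι E : Type*} [Fintype ι] [NormedAddCommGroup E]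
    [InnerProductSpace ℝ E] [FiniteDimensional ℝ E] (hcard : Module.finrank ℝ E = Fintype.card ι)
    {ν : E} (hν : ‖ν‖ = 1) (i₀ : ι) : ∃ b : OrthonormalBasis ι ℝ E, b i₀ = ν := by
  have hν' : Orthonormal ℝ (({i₀} : Set ι).domRestrict fun _ => ν) :=
    ⟨fun _ => hν, fun i j hij => (hij (Subsingleton.elim i j)).elim⟩
  obtain ⟨b, hb⟩ := hν'.exists_orthonormalBasis_extension_of_card_eq hcard
  exact ⟨b, hb i₀ rfl⟩

lemma integral_inner_map_mul_posPart_inner_mul_heatKE {d : ℕ} (hw : 0 < w)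
    (f : EuclideanSpace ℝ (Fin d) →ₗ[ℝ] EuclideanSpace ℝ (Fin d))
    {ν : EuclideanSpace ℝ (Fin d)} (hν : ‖ν‖ = 1) :
    ∫ z, ⟪f z, z⟫ * max ⟪ν, z⟫ 0 * heatKE d w z
      = 2 * w * (√w / √π) * (LinearMap.trace ℝ _ f + ⟪ν, f ν⟫) := by
  obtain ⟨i₀⟩ : Nonempty (Fin d) := by
    rcases isEmpty_or_nonempty (Fin d) with h | h
    · simp [Subsingleton.elim ν 0] at hν
    · exact h
  obtain ⟨b, rfl⟩ := exists_orthonormalBasis_apply_eq (by simp) hν i₀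
  let e : (Fin d → ℝ) ≃ᵐ EuclideanSpace ℝ (Fin d) :=
    (MeasurableEquiv.toLp 2 (Fin d → ℝ)).trans b.repr.symm.toMeasurableEquiv
  have he : MeasurePreserving e :=
    b.measurePreserving_repr_symm.comp (PiLp.volume_preserving_toLp (Fin d))
  have hcoord : ∀ x : Fin d → ℝ, ⟪b i₀, e x⟫ = x i₀ := fun x => by
    simp [e, ← b.repr_apply_apply]
  have hheat : ∀ x : Fin d → ℝ, heatKE d w (e x) = ∏ k, heatKernel1D w (x k) := fun x => by
    rw [show heatKE d w (e x) = heatKE d w (WithLp.toLp 2 x) by simp [e, heatKE],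
      heatKE_eq_prod hw.le]
  rw [← he.integral_comp']
  have hquad : ∀ x, ⟪f (e x), e x⟫ = LinearMap.toMatrix b.toBasis b.toBasis f *ᵥ x ⬝ᵥ x :=
    inner_map_repr_symm_toLp b f
  simp_rw [hquad, hcoord, hheat]
  rw [integral_quadForm_mul_posPart_mul_prod_heatKernel1D hw, ← LinearMap.trace_eq_matrix_trace,
    LinearMap.toMatrix_apply, b.coe_toBasis_repr_apply, b.coe_toBasis, b.repr_apply_apply]

end

theorem stmt_14_general (d : ℕ) (w : ℝ) (hw : 0 < w)
    (A : Matrix (Fin d) (Fin d) ℝ)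
    (ν : EuclideanSpace ℝ (Fin d)) (hν : ‖ν‖ = 1) :
    ∫ z : EuclideanSpace ℝ (Fin d),
        ⟪(show EuclideanSpace ℝ (Fin d) from WithLp.toLp 2 (A.mulVec fun i => z i)),
          gradient (heatKE d w) z⟫ * max ⟪ν, z⟫ 0
      = -(Real.sqrt w / Real.sqrt Real.pi) *
          (A.trace + ⟪ν, (show EuclideanSpace ℝ (Fin d) from WithLp.toLp 2 (A.mulVec fun i => ν i))⟫) := by
  have hmatrix : ∀ v : EuclideanSpace ℝ (Fin d),
      (show EuclideanSpace ℝ (Fin d) from WithLp.toLp 2 (A.mulVec fun i => v i))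
        = Matrix.toLpLin 2 2 A v := fun v => rfl
  have hintegrand : ∀ z, ⟪Matrix.toLpLin 2 2 A z, gradient (heatKE d w) z⟫ * max ⟪ν, z⟫ 0
      = -(2 * w)⁻¹ * (⟪Matrix.toLpLin 2 2 A z, z⟫ * max ⟪ν, z⟫ 0 * heatKE d w z) := fun z => by
    rw [gradient_heatKE, real_inner_smul_right]
    ring
  have htrace : LinearMap.trace ℝ _ (Matrix.toLpLin 2 2 A) = A.trace := by
    rw [Matrix.toLpLin_eq_toLin, Matrix.trace_toLin_eq]
  simp_rw [hmatrix, hintegrand]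
  rw [integral_const_mul, integral_inner_map_mul_posPart_inner_mul_heatKE hw _ hν, htrace]
  field_simp

/-- `∫ (Az)·∇G_w(z)·(ν·z)₊ dz = −(√w/√π)·(tr A + ν·Aν)` for a symmetric
matrix `A` and a unit vector `ν`. -/
theorem stmt_14 (d : ℕ) (hd : 1 ≤ d) (w : ℝ) (hw : 0 < w)
    (A : Matrix (Fin d) (Fin d) ℝ) (hA : A.IsSymm)
    (ν : EuclideanSpace ℝ (Fin d)) (hν : ‖ν‖ = 1) :
    ∫ z : EuclideanSpace ℝ (Fin d),
        ⟪(show EuclideanSpace ℝ (Fin d) from WithLp.toLp 2 (A.mulVec fun i => z i)),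
          gradient (heatKE d w) z⟫ * max ⟪ν, z⟫ 0
      = -(Real.sqrt w / Real.sqrt Real.pi) *
          (A.trace + ⟪ν, (show EuclideanSpace ℝ (Fin d) from WithLp.toLp 2 (A.mulVec fun i => ν i))⟫) :=
  stmt_14_general d w hw A ν hν
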